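/- Let n ≥ 1 and s ≥ 0 be natural numbers, let V be a unitary on (ℂ²)^{⊗n}, and let W be a unitary on (ℂ²)^{⊗(n+s)} satisfying the postselection relation (|1^s⟩⟨1^s| ⊗ I^{⊗n}) W |0^{n+s}⟩ = 2^{−s/2} · |1^s⟩ ⊗ (V |0^n⟩). Then p_W^{IQP,s+1}(1) > 0 if and only if p_V(1) > 0; in particular, if p_V(1) = 0 then p_W^{IQP,s+1}(1) = 0. (This yields NQP ⊆ NQP_IQP: any nondeterministic quantum acceptance criterion can be realized by a postselecting circuit family.) -/
import Mathlib


open Matrix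

/-- The all-zeros basis state `|0^n⟩` of `n` qubits. -/
noncomputable def ket0s (n : ℕ) : (Fin n → Fin 2) → ℂ :=
  fun z => if z = fun _ => 0 then 1 else 0

/-- The all-zeros basis state `|0^{n+s}⟩` of `s + n` qubits, with the `s`
postselection qubits as the first tensor factor. -/
noncomputable def ket0s' (s n : ℕ) : ((Fin s → Fin 2) × (Fin n → Fin 2)) → ℂ :=
  fun z => if z = ((fun _ => 0), (fun _ => 0)) then 1 else 0

/-- If the postselection relation
`(|1^s⟩⟨1^s| ⊗ I^{⊗n}) W |0^{n+s}⟩ = 2^{−s/2} · |1^s⟩ ⊗ (V |0^n⟩)` holds, then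
`p_W^{IQP,s+1}(1) > 0` if and only if `p_V(1) > 0`; in particular, if
`p_V(1) = 0` then `p_W^{IQP,s+1}(1) = 0`. This yields `NQP ⊆ NQP_IQP`. -/
theorem iqp_postselection_prob_pos_iff
    (n s : ℕ) (hn : 1 ≤ n)
    (V : Matrix (Fin n → Fin 2) (Fin n → Fin 2) ℂ)
    (W : Matrix ((Fin s → Fin 2) × (Fin n → Fin 2))
                ((Fin s → Fin 2) × (Fin n → Fin 2)) ℂ)
    (hV : V ∈ Matrix.unitaryGroup (Fin n → Fin 2) ℂ)
    (hW : W ∈ Matrix.unitaryGroup ((Fin s → Fin 2) × (Fin n → Fin 2)) ℂ)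
    -- postselection relation:
    -- (|1^s⟩⟨1^s| ⊗ I^{⊗n}) W |0^{n+s}⟩ = 2^{−s/2} · |1^s⟩ ⊗ (V |0^n⟩)
    (hpost : ∀ (u : Fin s → Fin 2) (v : Fin n → Fin 2),
      (if u = fun _ => 1 then W.mulVec (ket0s' s n) (u, v) else 0) =
      (((((Real.sqrt 2) ^ s)⁻¹ : ℝ)) : ℂ) * (if u = fun _ => 1 then 1 else 0) *
        V.mulVec (ket0s n) v) :
    (0 < (∑ z : (Fin s → Fin 2) × (Fin n → Fin 2),
        Complex.normSq
          (if z.1 = (fun _ => 1) ∧ z.2 ⟨0, hn⟩ = 1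
            then W.mulVec (ket0s' s n) z else 0)) ↔
      0 < (∑ v : Fin n → Fin 2,
        Complex.normSq (if v ⟨0, hn⟩ = 1 then V.mulVec (ket0s n) v else 0))) ∧
    ((∑ v : Fin n → Fin 2,
        Complex.normSq (if v ⟨0, hn⟩ = 1 then V.mulVec (ket0s n) v else 0)) = 0 →
      (∑ z : (Fin s → Fin 2) × (Fin n → Fin 2),
        Complex.normSq
          (if z.1 = (fun _ => 1) ∧ z.2 ⟨0, hn⟩ = 1
            then W.mulVec (ket0s' s n) z else 0)) = 0) := by
  set a : ℝ := ((Real.sqrt 2) ^ s)⁻¹ with ha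
  have hapos : 0 < a := by
    have : (0:ℝ) < Real.sqrt 2 := Real.sqrt_pos.mpr (by norm_num)
    positivity
  have key : ∀ v, W.mulVec (ket0s' s n) ((fun _ => 1), v) =
      (a : ℂ) * V.mulVec (ket0s n) v := by
    intro v
    have h := hpost (fun _ => 1) v
    simpa using h
  have hsum : (∑ z : (Fin s → Fin 2) × (Fin n → Fin 2),
        Complex.normSq
          (if z.1 = (fun _ => 1) ∧ z.2 ⟨0, hn⟩ = 1
            then W.mulVec (ket0s' s n) z else 0)) =
      a ^ 2 * (∑ v : Fin n → Fin 2,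
        Complex.normSq (if v ⟨0, hn⟩ = 1 then V.mulVec (ket0s n) v else 0)) := by
    rw [Fintype.sum_prod_type]
    rw [Finset.mul_sum]
    rw [Finset.sum_eq_single (fun _ => (1 : Fin 2))]
    · apply Finset.sum_congr rfl
      intro v _
      by_cases hv : v ⟨0, hn⟩ = 1
      · simp only [hv, and_true, if_pos rfl, key v]
        simp only [if_true]
        rw [Complex.normSq_mul]
        simp [Complex.normSq_ofReal, sq]
      · simp [hv]
    · intro u _ hu
      simp [hu]
    · simp
  constructor
  · rw [hsum]
    constructor
    · intro h
      by_contra hle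
      push_neg at hle
      have h0 : (∑ v : Fin n → Fin 2,
          Complex.normSq (if v ⟨0, hn⟩ = 1 then V.mulVec (ket0s n) v else 0)) = 0 :=
        le_antisymm hle (Finset.sum_nonneg fun _ _ => Complex.normSq_nonneg _)
      rw [h0, mul_zero] at h
      exact lt_irrefl 0 h
    · intro h
      exact mul_pos (by positivity) h
  · intro h
    rw [hsum, h, mul_zero]
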